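/- Let G be a finite simple graph, J a vertex subset with G|_J connected, and j ∈ J. Suppose J \ {j} is partitioned into nonempty sets I_1, …, I_r such that each G|_{I_p} is connected and G|_{I_p ∪ I_q} is disconnected for all p ≠ q. Then for each p there exists y_p ∈ I_p adjacent to j, and for p ≠ q the vertices y_p and y_q are not adjacent. In particular, if r ≥ 3, then G contains an induced claw (star with three edges). -/

import Mathlib

/-!
Two parts `I p`, `I q` whose union is not connected can neither meet nor be joined by an edge.
Hence a walk inside `J` from a vertex of `I p` to `j` can only leave `I p` along an edge into
`j`, which gives `y p`; the `y p` are pairwise distinct and non-adjacent, so `j` with any three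
of them spans an induced claw.
-/

open SimpleGraph

def clawGraph : SimpleGraph (Fin 4) := SimpleGraph.fromEdgeSet {s(0,1), s(0,2), s(0,3)}

lemma clawGraph_adj {i k : Fin 4} : clawGraph.Adj i k ↔ i ≠ k ∧ (i = 0 ∨ k = 0) := by
  fin_cases i <;> fin_cases k <;> simp [clawGraph]

namespace SimpleGraph

variable {V : Type*} {G : SimpleGraph V}

lemma clawGraph_isIndContained {c : V} {l : Fin 3 → V} (hl : Function.Injective l)
    (hadj : ∀ a, G.Adj c (l a)) (hnadj : ∀ a b, a ≠ b → ¬G.Adj (l a) (l b)) :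
    clawGraph ⊴ G := by
  refine ⟨⟨⟨Fin.cons c l, Fin.cons_injective_iff.2 ⟨?_, hl⟩⟩, ?_⟩⟩
  · rintro ⟨a, rfl⟩
    exact G.loopless.irrefl _ (hadj a)
  · intro i k
    rw [clawGraph_adj]
    induction i using Fin.cases <;> induction k using Fin.cases
    case succ.succ a b =>
      have : ¬G.Adj (l a) (l b) := fun h => hnadj a b (G.ne_of_adj h <| congrArg l ·) h
      simpa using this
    all_goals simp [hadj, (hadj _).symm, Fin.succ_ne_zero, (Fin.succ_ne_zero _).symm]

lemma not_adj_of_not_connected_induce_union {A B : Set V} (hA : (G.induce A).Preconnected)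
    (hB : (G.induce B).Preconnected) (hAB : ¬(G.induce (A ∪ B)).Connected)
    {a b : V} (ha : a ∈ A) (hb : b ∈ B) : ¬G.Adj a b :=
  fun hab => hAB (connected_induce_union hA hB ha hb hab)

lemma disjoint_of_not_connected_induce_union {A B : Set V} (hA : (G.induce A).Preconnected)
    (hB : (G.induce B).Preconnected) (hAB : ¬(G.induce (A ∪ B)).Connected) : Disjoint A B :=
  Set.disjoint_iff_inter_eq_empty.2 <| Set.not_nonempty_iff_eq_empty.1 fun h =>
    hAB (induce_union_connected hA hB h)

lemma exists_adj_of_preconnected_induce {J A : Set V} (hJ : (G.induce J).Preconnected)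
    {x z : V} (hxA : x ∈ A) (hxJ : x ∈ J) (hzJ : z ∈ J) (hzA : z ∉ A) :
    ∃ u ∈ A, ∃ v ∈ J \ A, G.Adj u v := by
  obtain ⟨w⟩ := hJ ⟨x, hxJ⟩ ⟨z, hzJ⟩
  obtain ⟨d, -, hd₁, hd₂⟩ := w.exists_boundary_dart (Subtype.val ⁻¹' A) hxA hzA
  exact ⟨_, hd₁, _, ⟨d.snd.2, hd₂⟩, d.adj⟩

lemma exists_adj_of_boundary_eq {J A : Set V} {j : V} (hJ : (G.induce J).Preconnected)
    (hj : j ∈ J) (hA : A ⊆ J \ {j}) (hAne : A.Nonempty)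
    (hleave : ∀ u ∈ A, ∀ v ∈ J \ A, G.Adj u v → v = j) : ∃ y ∈ A, G.Adj j y := by
  obtain ⟨x, hx⟩ := hAne
  obtain ⟨u, hu, v, hv, huv⟩ :=
    exists_adj_of_preconnected_induce hJ hx (hA hx).1 hj fun h => (hA h).2 rfl
  obtain rfl := hleave u hu v hv huv
  exact ⟨u, hu, huv.symm⟩

end SimpleGraph

theorem stmt5_general {V : Type*} (G : SimpleGraph V) (J : Set V) (j : V)
    (hJ : (G.induce J).Connected) (hj : j ∈ J) (r : ℕ) (I : Fin r → Set V)
    (hunion : (⋃ p, I p) = J \ {j})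
    (hconn : ∀ p, (G.induce (I p)).Connected)
    (hsep : ∀ p q, p ≠ q → ¬ (G.induce (I p ∪ I q)).Connected) :
    ∃ y : Fin r → V,
      (∀ p, y p ∈ I p ∧ G.Adj j (y p)) ∧
      (∀ p q, p ≠ q → ¬ G.Adj (y p) (y q)) ∧
      (3 ≤ r → ∃ S : Set V, Nonempty (G.induce S ≃g clawGraph)) := by
  have hnadj : ∀ p q, p ≠ q → ∀ a ∈ I p, ∀ b ∈ I q, ¬G.Adj a b :=
    fun p q hpq _ ha _ hb => not_adj_of_not_connected_induce_union (hconn p).preconnected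
      (hconn q).preconnected (hsep p q hpq) ha hb
  have hleave : ∀ p, ∀ u ∈ I p, ∀ v ∈ J \ I p, G.Adj u v → v = j := by
    intro p u hu v ⟨hvJ, hvp⟩ huv
    by_contra hvj
    obtain ⟨q, hvq⟩ := Set.mem_iUnion.1 (hunion ▸ ⟨hvJ, hvj⟩ : v ∈ ⋃ p, I p)
    exact hnadj p q (fun h => hvp (h ▸ hvq)) u hu v hvq huv
  choose y hyI hyj using fun p => exists_adj_of_boundary_eq hJ.preconnected hj
    (hunion ▸ Set.subset_iUnion I p) (Set.nonempty_coe_sort.1 (hconn p).nonempty) (hleave p)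
  have hy_inj : Function.Injective y := fun p q hpq => by
    by_contra hne
    exact (disjoint_of_not_connected_induce_union (hconn p).preconnected (hconn q).preconnected
      (hsep p q hne)).ne_of_mem (hyI p) (hyI q) hpq
  refine ⟨y, fun p => ⟨hyI p, hyj p⟩, fun p q hpq => hnadj p q hpq _ (hyI p) _ (hyI q), ?_⟩
  intro hr
  have hclaw : clawGraph ⊴ G := clawGraph_isIndContained (l := y ∘ Fin.castLE hr)
    (hy_inj.comp (Fin.castLE_injective hr)) (fun _ => hyj _)
    fun a b hab => hnadj _ _ ((Fin.castLE_injective hr).ne hab) _ (hyI _) _ (hyI _)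
  obtain ⟨S, ⟨e⟩⟩ := isIndContained_iff_exists_iso_induce.1 hclaw
  exact ⟨S, ⟨e.symm⟩⟩

theorem stmt5 {V : Type*} [Fintype V] (G : SimpleGraph V) (J : Set V) (j : V)
    (hJ : (G.induce J).Connected) (hj : j ∈ J) (r : ℕ) (I : Fin r → Set V)
    (hne : ∀ p, (I p).Nonempty)
    (hdisj : ∀ p q, p ≠ q → Disjoint (I p) (I q))
    (hunion : (⋃ p, I p) = J \ {j})
    (hconn : ∀ p, (G.induce (I p)).Connected)
    (hsep : ∀ p q, p ≠ q → ¬ (G.induce (I p ∪ I q)).Connected) :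
    ∃ y : Fin r → V,
      (∀ p, y p ∈ I p ∧ G.Adj j (y p)) ∧
      (∀ p q, p ≠ q → ¬ G.Adj (y p) (y q)) ∧
      (3 ≤ r → ∃ S : Set V, Nonempty (G.induce S ≃g clawGraph)) :=
  stmt5_general G J j hJ hj r I hunion hconn hsep
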